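/- arXiv:2409.10029 — 2 statements merged into one kernel-verified Lean document; each statement's English description precedes it below -/
import Mathlib

section
/- Let X be a nonempty set, k a field of characteristic 0, and N : X × X → ℕ. For all x,y ∈ X, n,m ∈ ℤ, and every L ∈ ℕ with L ≥ N(x,y), the polynomial f^{1,0}_{x,y}(n,m;L) = Σ_{t=0}^{L} (−1)^t C(L,t) x^(1)(n−t) y^(0)(m+t) belongs to the ideal I(N). -/
noncomputable section

/-- The polynomial algebra `F = k[B^(ω)]` in the variables `a^(p)(n)`
(`a ∈ X`, `p ∈ ℕ`, `n ∈ ℤ`), encoded as triples `(a, p, n)`. -/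
abbrev FreeDiffAlg (k X : Type*) [CommRing k] : Type _ :=
  MvPolynomial (X × ℕ × ℤ) k

/-- The derivation `d : F → F` determined by `d(a^(p)(n)) = a^(p+1)(n)`. -/
def derD (k X : Type*) [CommRing k] :
    Derivation k (FreeDiffAlg k X) (FreeDiffAlg k X) :=
  MvPolynomial.mkDerivation k fun v : X × ℕ × ℤ =>
    MvPolynomial.X (v.1, v.2.1 + 1, v.2.2)

/-- The weight of the variable `a^(p)(n)` is `p - 1`. -/
def wtVar {X : Type*} (v : X × ℕ × ℤ) : ℤ := (v.2.1 : ℤ) - 1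

/-- `F_w`: the `k`-span of the monomials of weight `w` (the weight of a monomial
is the sum of the weights of its variables, counted with multiplicity). -/
def Fwt (k X : Type*) [CommRing k] (w : ℤ) : Submodule k (FreeDiffAlg k X) :=
  MvPolynomial.weightedHomogeneousSubmodule k (wtVar (X := X)) w

/-- The weight of a monomial (given by its exponent function). -/
def wtMon {X : Type*} (s : (X × ℕ × ℤ) →₀ ℕ) : ℤ :=
  s.sum fun v c => (c : ℤ) * wtVar v

/-- `f^{p,q}_{a,b}(n, m; L) = Σ_{t=0}^{L} (−1)^t C(L,t) a^(p)(n−t) b^(q)(m+t)`. -/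
def fpq (k : Type*) {X : Type*} [CommRing k] (a b : X) (p q : ℕ)
    (n m : ℤ) (L : ℕ) : FreeDiffAlg k X :=
  ∑ t ∈ Finset.range (L + 1),
    ((-1 : k) ^ t * (L.choose t : k)) •
      (MvPolynomial.X (a, p, n - (t : ℤ)) * MvPolynomial.X (b, q, m + (t : ℤ)))

/-- The ideal `I(N)` generated by all `d^l(f_{a,b}(n,m))`,
where `f_{a,b}(n,m) = f^{1,0}_{a,b}(n, m; N(a,b))`. -/
def idealI (k : Type*) {X : Type*} [CommRing k] (N : X × X → ℕ) :
    Ideal (FreeDiffAlg k X) :=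
  Ideal.span { g | ∃ (a b : X) (n m : ℤ) (l : ℕ),
    g = (⇑(derD k X))^[l] (fpq k a b 1 0 n m (N (a, b))) }

/-- The ideal `K(N̄)` generated by all `d^l(f^{p,q}_{a,b}(n, m; N̄((a,p),(b,q))))`. -/
def idealK (k : Type*) {X : Type*} [CommRing k]
    (Nbar : (X × ℕ) × (X × ℕ) → ℕ) : Ideal (FreeDiffAlg k X) :=
  Ideal.span { g | ∃ (a b : X) (p q l : ℕ) (n m : ℤ),
    g = (⇑(derD k X))^[l] (fpq k a b p q n m (Nbar ((a, p), (b, q)))) }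

section AltBinomSum

variable {R G : Type*} [CommRing R] [AddCommGroup G] [Module R G]

variable (R) in
def altBinomSum (L : ℕ) (g : ℕ → G) : G :=
  ∑ t ∈ Finset.range (L + 1), ((-1 : R) ^ t * (L.choose t : R)) • g t

/-- Pascal's rule `C(L+1, t+1) = C(L, t) + C(L, t+1)`, summed against `g`. -/
theorem altBinomSum_succ (L : ℕ) (g : ℕ → G) :
    altBinomSum R (L + 1) g = altBinomSum R L g - altBinomSum R L (fun t => g (t + 1)) := by
  have hlast : altBinomSum R L g
      = ∑ t ∈ Finset.range (L + 1 + 1), ((-1 : R) ^ t * (L.choose t : R)) • g t := by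
    rw [Finset.sum_range_succ, Nat.choose_succ_self, Nat.cast_zero, mul_zero, zero_smul,
      add_zero, altBinomSum]
  rw [eq_sub_iff_add_eq, hlast, altBinomSum, altBinomSum, Finset.sum_range_succ',
    Finset.sum_range_succ' _ (L + 1), add_right_comm, ← Finset.sum_add_distrib]
  congr 1
  · refine Finset.sum_congr rfl fun t _ => ?_
    rw [← add_smul, Nat.choose_succ_succ', Nat.cast_add, pow_succ]
    congr 1
    ring
  · simp

end AltBinomSum

theorem fpq_eq_altBinomSum (k : Type*) {X : Type*} [CommRing k] (a b : X) (p q : ℕ)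
    (n m : ℤ) (L : ℕ) :
    fpq k a b p q n m L = altBinomSum k L fun t =>
      (MvPolynomial.X (a, p, n - (t : ℤ)) * MvPolynomial.X (b, q, m + (t : ℤ)) :
        FreeDiffAlg k X) :=
  rfl

theorem fpq_succ (k : Type*) {X : Type*} [CommRing k] (a b : X) (p q : ℕ)
    (n m : ℤ) (L : ℕ) :
    fpq k a b p q n m (L + 1) = fpq k a b p q n m L - fpq k a b p q (n - 1) (m + 1) L := by
  simp only [fpq_eq_altBinomSum, altBinomSum_succ, Nat.cast_succ, sub_add_eq_sub_sub_swap,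
    add_assoc, add_comm (1 : ℤ)]

theorem fpq_one_zero_mem_idealI_general
    (k X : Type*) [Field k]
    (N : X × X → ℕ) (x y : X) (n m : ℤ) (L : ℕ) (hL : N (x, y) ≤ L) :
    fpq k x y 1 0 n m L ∈ idealI k N := by
  induction L, hL using Nat.le_induction generalizing n m with
  | base => exact Ideal.subset_span ⟨x, y, n, m, 0, rfl⟩
  | succ L _ ih =>
    rw [fpq_succ]
    exact sub_mem (ih n m) (ih (n - 1) (m + 1))

/-- `f^{1,0}_{x,y}(n, m; L) ∈ I(N)` whenever `L ≥ N(x,y)`. -/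
theorem fpq_one_zero_mem_idealI
    (k X : Type*) [Field k] [CharZero k] [Nonempty X]
    (N : X × X → ℕ) (x y : X) (n m : ℤ) (L : ℕ) (hL : N (x, y) ≤ L) :
    fpq k x y 1 0 n m L ∈ idealI k N :=
  fpq_one_zero_mem_idealI_general k X N x y n m L hL

end
end

section
/- Let X be a nonempty set, k a field of characteristic 0, N : X × X → ℕ, and M ∈ ℕ with N(a,b) ≤ M for all a,b ∈ X. Then for all a,x,y ∈ X, every r ≥ 2, and all k₀,n,m ∈ ℤ, the product a^(r)(k₀) · f^{0,0}_{x,y}(n,m; 3M) belongs to the ideal I(N). -/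
noncomputable section

/-!
Read `a^(p)(n)` as the coefficients of a series `a^(p)(z)`. Modulo `I(N)`, the family
`(i, j, l) ↦ a^(p)(i) b^(q)(j) c^(r)(l)` on `ℤ³` encodes `a^(p)(z₀) b^(q)(z) c^(r)(w)`, and
multiplying by `z₀ - z`, `z₀ - w`, `z - w` becomes a forward difference along `(1, -1, 0)`,
`(1, 0, -1)`, `(0, 1, -1)`; the coefficients `f^{p,q}` are iterated differences.
Since `a'' x ≡ -a' x'` modulo `d f_{a,x}` after multiplication by `(z₀ - z)^{N(a,x)}`, and
`(z - w)^M` kills `a' x' y`, the family `T` of `a''(z₀) x(z) y(w)` is killed by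
`(z₀ - z)^{N(a,x)} (z - w)^M`, and likewise by `(z₀ - w)^{N(a,y)} (z - w)^M`. Expanding
`((z₀ - w) - (z₀ - z))^{2M} = (z - w)^{2M}` binomially, every term is killed, so `(z - w)^{3M}`
kills `T`: this is the case `r = 2`. Larger `r` follow by applying `d`, using
`d (a^(r) f^{0,0}) = a^(r+1) f^{0,0} + a^(r) (f^{1,0} + f^{0,1})`.
-/

open Finset MvPolynomial fwdDiff_aux

section FwdDiff

variable {M G : Type*} [AddCommGroup M] [AddCommGroup G]

theorem fwdDiff_iter_sub_nsmul_eq_sum (h : M) (f : M → G) (n : ℕ) (y : M) :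
    (fwdDiff h)^[n] f (y - n • h) =
      ∑ t ∈ range (n + 1), ((-1 : ℤ) ^ t * n.choose t) • f (y - t • h) := by
  rw [fwdDiff_iter_eq_sum_shift, ← sum_range_reflect]
  refine sum_congr rfl fun t ht => ?_
  obtain ⟨s, rfl⟩ := Nat.exists_eq_add_of_le (Nat.lt_succ_iff.mp (mem_range.mp ht))
  rw [Nat.add_sub_cancel, Nat.add_sub_cancel_left, Nat.choose_symm_add, add_nsmul]
  congr 2
  · rw [Nat.add_sub_cancel]
  · abel

theorem fwdDiffₗ_commute (h h' : M) : Commute (fwdDiffₗ M G h) (fwdDiffₗ M G h') := by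
  ext f y
  simp only [Module.End.mul_apply, fwdDiffₗ_apply, fwdDiff]
  rw [add_right_comm]
  abel

theorem fwdDiffₗ_add_eq_shiftₗ_mul_add (h h' : M) :
    fwdDiffₗ M G (h + h') = shiftₗ M G h' * fwdDiffₗ M G h + fwdDiffₗ M G h' := by
  ext f y
  simp only [LinearMap.add_apply, Pi.add_apply, Module.End.mul_apply, shiftₗ_apply,
    fwdDiffₗ_apply, fwdDiff]
  rw [add_assoc, add_comm h]
  abel

theorem shiftₗ_commute_fwdDiffₗ (h h' : M) : Commute (shiftₗ M G h) (fwdDiffₗ M G h') :=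
  (fwdDiffₗ_commute h h').add_left (Commute.one_left _)

theorem shiftₗ_pow_apply_eq_zero_iff (h : M) (n : ℕ) {f : M → G} :
    (shiftₗ M G h ^ n) f = 0 ↔ f = 0 := by
  refine ⟨fun hf => funext fun y => ?_, fun hf => hf ▸ map_zero (shiftₗ M G h ^ n)⟩
  simpa [shiftₗ_pow_apply] using congr_fun hf (y - n • h)

theorem fwdDiffₗ_pow_mk_comp_eq_zero_iff {R : Type*} [CommRing R] (J : Ideal R) (g : M → R)
    (h : M) (n : ℕ) :
    (fwdDiffₗ M (R ⧸ J) h ^ n) (Ideal.Quotient.mk J ∘ g) = 0 ↔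
      ∀ y, ∑ t ∈ range (n + 1), ((-1 : ℤ) ^ t * n.choose t) • g (y - t • h) ∈ J := by
  rw [coe_fwdDiffₗ_pow, funext_iff, (Equiv.subRight (n • h)).surjective.forall]
  refine forall_congr' fun y => ?_
  rw [Equiv.subRight_apply, fwdDiff_iter_sub_nsmul_eq_sum, Pi.zero_apply,
    ← Ideal.Quotient.eq_zero_iff_mem]
  simp [map_sum]

end FwdDiff

theorem Module.End.sub_pow_apply_eq_zero_of_le {R N : Type*} [Ring R] [AddCommGroup N]
    [Module R N] {f g : Module.End R N} (hfg : Commute f g) {v : N} {m n k : ℕ} (hf : (f ^ m) v = 0)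
    (hg : (g ^ n) v = 0) (hk : m + n ≤ k + 1) : ((f - g) ^ k) v = 0 := by
  let I : Ideal (Module.End R N) := LinearMap.ker (LinearMap.toSpanSingleton _ _ v)
  have hg' : (-g) ^ n ∈ I := by
    rw [neg_pow]
    exact I.mul_mem_left _ hg
  simpa [I, sub_eq_add_neg] using I.add_pow_mem_of_pow_mem_of_le_of_commute hf hg' hk hfg.neg_right

theorem Module.End.apply_apply_eq_zero_of_commute {R N : Type*} [Semiring R] [AddCommGroup N]
    [Module R N] {A B : Module.End R N} (hAB : Commute A B) {u w : N} (huw : A (u + w) = 0)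
    (hw : B w = 0) : A (B u) = 0 :=
  calc A (B u) = A (B (u + w)) - A (B w) := by rw [map_add, map_add, add_sub_cancel_right]
    _ = 0 := by
      rw [← Module.End.mul_apply, hAB.eq, Module.End.mul_apply, huw, hw, map_zero, map_zero,
        sub_zero]

section

variable {k ι : Type*} [CommRing k]

local notation "Δ[" J ", " h "]" => fwdDiffₗ (ℤ × ℤ × ℤ) (FreeDiffAlg k ι ⧸ J) h

theorem derD_X (a : ι) (p : ℕ) (n : ℤ) :
    derD k ι (X (a, p, n)) = X (a, p + 1, n) :=
  mkDerivation_X _ _ _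

theorem derD_fpq (a b : ι) (p q : ℕ) (n m : ℤ) (L : ℕ) :
    derD k ι (fpq k a b p q n m L) = fpq k a b (p + 1) q n m L + fpq k a b p (q + 1) n m L := by
  simp only [fpq, map_sum, ← sum_add_distrib, Derivation.map_smul, Derivation.leibniz, derD_X,
    smul_eq_mul, ← smul_add]
  refine sum_congr rfl fun t _ => ?_
  rw [add_comm, mul_comm (X (b, q, _))]

theorem fpq_swap (a b : ι) (p q : ℕ) (n m : ℤ) (L : ℕ) :
    fpq k a b p q n m L = (-1 : k) ^ L • fpq k b a q p (m + L) (n - L) L := by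
  rw [fpq, fpq, smul_sum, ← sum_range_reflect]
  refine sum_congr rfl fun t ht => ?_
  obtain ⟨s, rfl⟩ := Nat.exists_eq_add_of_le (Nat.lt_succ_iff.mp (mem_range.mp ht))
  rw [Nat.add_sub_cancel, Nat.add_sub_cancel_left, Nat.choose_symm_add, smul_smul, mul_comm (X _)]
  push_cast
  have hsq : ((-1 : k) ^ t) ^ 2 = 1 := by rw [← pow_mul, mul_comm, pow_mul, neg_one_sq, one_pow]
  congr 1
  · linear_combination (-(-1 : k) ^ s * ((t + s).choose s : k)) * hsq
  · congr 4 <;> ring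

theorem fpq_eq_sum_zsmul (a b : ι) (p q : ℕ) (n m : ℤ) (L : ℕ) :
    fpq k a b p q n m L = ∑ t ∈ range (L + 1),
      ((-1 : ℤ) ^ t * L.choose t) • (X (a, p, n - t) * X (b, q, m + t)) := by
  refine sum_congr rfl fun t _ => ?_
  rw [← Int.cast_smul_eq_zsmul k]
  push_cast
  rfl

variable (k) in
def varTriple (a b c : ι) (p q r : ℕ) (v : ℤ × ℤ × ℤ) : FreeDiffAlg k ι :=
  X (a, p, v.1) * X (b, q, v.2.1) * X (c, r, v.2.2)

theorem sum_varTriple_sub_nsmul_fst_snd (a b c : ι) (p q r L : ℕ) (i j l : ℤ) :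
    ∑ t ∈ range (L + 1), ((-1 : ℤ) ^ t * L.choose t) •
        varTriple k a b c p q r ((i, j, l) - t • (1, -1, 0)) =
      fpq k a b p q i j L * X (c, r, l) := by
  rw [fpq_eq_sum_zsmul, sum_mul]
  refine sum_congr rfl fun t _ => ?_
  have hv : (i, j, l) - t • ((1, -1, 0) : ℤ × ℤ × ℤ) = (i - t, j + t, l) := by ext <;> simp
  rw [hv, smul_mul_assoc]
  rfl

theorem sum_varTriple_sub_nsmul_fst_thd (a b c : ι) (p q r L : ℕ) (i j l : ℤ) :
    ∑ t ∈ range (L + 1), ((-1 : ℤ) ^ t * L.choose t) •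
        varTriple k a b c p q r ((i, j, l) - t • (1, 0, -1)) =
      fpq k a c p r i l L * X (b, q, j) := by
  rw [fpq_eq_sum_zsmul, sum_mul]
  refine sum_congr rfl fun t _ => ?_
  have hv : (i, j, l) - t • ((1, 0, -1) : ℤ × ℤ × ℤ) = (i - t, j, l + t) := by ext <;> simp
  rw [hv, smul_mul_assoc, varTriple, mul_right_comm]

theorem sum_varTriple_sub_nsmul_snd_thd (a b c : ι) (p q r L : ℕ) (i j l : ℤ) :
    ∑ t ∈ range (L + 1), ((-1 : ℤ) ^ t * L.choose t) •
        varTriple k a b c p q r ((i, j, l) - t • (0, 1, -1)) =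
      X (a, p, i) * fpq k b c q r j l L := by
  rw [fpq_eq_sum_zsmul, mul_sum]
  refine sum_congr rfl fun t _ => ?_
  have hv : (i, j, l) - t • ((0, 1, -1) : ℤ × ℤ × ℤ) = (i, j - t, l + t) := by ext <;> simp
  rw [hv, mul_smul_comm, varTriple, mul_assoc]

theorem fwdDiffₗ_snd_thd_pow_mk_comp_varTriple_eq_zero_iff (J : Ideal (FreeDiffAlg k ι))
    (a b c : ι) (p q r L : ℕ) :
    (Δ[J, (0, 1, -1)] ^ L) (Ideal.Quotient.mk J ∘ varTriple k a b c p q r) = 0 ↔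
      ∀ i j l, X (a, p, i) * fpq k b c q r j l L ∈ J := by
  simp only [fwdDiffₗ_pow_mk_comp_eq_zero_iff, Prod.forall, sum_varTriple_sub_nsmul_snd_thd]

variable (N : ι × ι → ℕ)

theorem iterate_derD_fpq_mem_idealI (a b : ι) (n m : ℤ) (l : ℕ) :
    (derD k ι)^[l] (fpq k a b 1 0 n m (N (a, b))) ∈ idealI k N :=
  Ideal.subset_span ⟨a, b, n, m, l, rfl⟩

theorem fpq_one_zero_mem_idealI_s13 (a b : ι) (n m : ℤ) :
    fpq k a b 1 0 n m (N (a, b)) ∈ idealI k N :=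
  iterate_derD_fpq_mem_idealI N a b n m 0

theorem fpq_zero_one_mem_idealI (a b : ι) (n m : ℤ) :
    fpq k a b 0 1 n m (N (b, a)) ∈ idealI k N := by
  rw [fpq_swap, smul_eq_C_mul]
  exact Ideal.mul_mem_left _ _ (fpq_one_zero_mem_idealI_s13 N b a _ _)

theorem fpq_two_zero_add_fpq_one_one_mem_idealI (a b : ι) (n m : ℤ) :
    fpq k a b 2 0 n m (N (a, b)) + fpq k a b 1 1 n m (N (a, b)) ∈ idealI k N := by
  simpa [derD_fpq] using iterate_derD_fpq_mem_idealI (k := k) N a b n m 1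

theorem derD_mem_idealI {u : FreeDiffAlg k ι} (hu : u ∈ idealI k N) :
    derD k ι u ∈ idealI k N := by
  induction hu using Submodule.span_induction with
  | mem g hg =>
    obtain ⟨a, b, n, m, l, rfl⟩ := hg
    simpa only [Function.iterate_succ_apply'] using iterate_derD_fpq_mem_idealI N a b n m (l + 1)
  | zero => simp
  | add u v _ _ hu hv => simpa using add_mem hu hv
  | smul c u _ hu =>
    rw [smul_eq_mul, Derivation.leibniz, smul_eq_mul, smul_eq_mul]
    exact add_mem (Ideal.mul_mem_left _ _ hu) (Ideal.mul_mem_right _ _ ‹_›)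

theorem var_mul_fpq_one_zero_mem_idealI {b c : ι} {L : ℕ} (hL : N (b, c) ≤ L) (a : ι) (p : ℕ)
    (i j l : ℤ) : X (a, p, i) * fpq k b c 1 0 j l L ∈ idealI k N := by
  revert i j l
  rw [← fwdDiffₗ_snd_thd_pow_mk_comp_varTriple_eq_zero_iff]
  refine Module.End.pow_map_zero_of_le hL ?_
  rw [fwdDiffₗ_snd_thd_pow_mk_comp_varTriple_eq_zero_iff]
  exact fun i j l => Ideal.mul_mem_left _ _ (fpq_one_zero_mem_idealI_s13 N b c j l)

theorem var_mul_fpq_zero_one_mem_idealI {b c : ι} {L : ℕ} (hL : N (c, b) ≤ L) (a : ι) (p : ℕ)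
    (i j l : ℤ) : X (a, p, i) * fpq k b c 0 1 j l L ∈ idealI k N := by
  revert i j l
  rw [← fwdDiffₗ_snd_thd_pow_mk_comp_varTriple_eq_zero_iff]
  refine Module.End.pow_map_zero_of_le hL ?_
  rw [fwdDiffₗ_snd_thd_pow_mk_comp_varTriple_eq_zero_iff]
  exact fun i j l => Ideal.mul_mem_left _ _ (fpq_zero_one_mem_idealI N b c j l)

theorem fwdDiffₗ_pow_fwdDiffₗ_pow_varTriple_fst_snd_eq_zero (a : ι) {b c : ι} {M : ℕ}
    (hM : N (b, c) ≤ M) :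
    (Δ[idealI k N, (1, -1, 0)] ^ N (a, b))
      ((Δ[idealI k N, (0, 1, -1)] ^ M)
        (Ideal.Quotient.mk (idealI k N) ∘ varTriple k a b c 2 0 0)) = 0 := by
  refine Module.End.apply_apply_eq_zero_of_commute ((fwdDiffₗ_commute _ _).pow_pow _ _)
    (w := Ideal.Quotient.mk (idealI k N) ∘ varTriple k a b c 1 1 0) ?_ ?_
  · change (Δ[idealI k N, (1, -1, 0)] ^ N (a, b))
      (Ideal.Quotient.mk _ ∘ (varTriple k a b c 2 0 0 + varTriple k a b c 1 1 0)) = 0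
    rw [fwdDiffₗ_pow_mk_comp_eq_zero_iff]
    rintro ⟨i, j, l⟩
    simp only [Pi.add_apply, smul_add, sum_add_distrib, sum_varTriple_sub_nsmul_fst_snd, ← add_mul]
    exact Ideal.mul_mem_right _ _ (fpq_two_zero_add_fpq_one_one_mem_idealI N a b i j)
  · exact (fwdDiffₗ_snd_thd_pow_mk_comp_varTriple_eq_zero_iff _ _ _ _ _ _ _ _).mpr
      (var_mul_fpq_one_zero_mem_idealI N hM a 1)

theorem fwdDiffₗ_pow_fwdDiffₗ_pow_varTriple_fst_thd_eq_zero (a : ι) {b c : ι} {M : ℕ}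
    (hM : N (c, b) ≤ M) :
    (Δ[idealI k N, (1, 0, -1)] ^ N (a, c))
      ((Δ[idealI k N, (0, 1, -1)] ^ M)
        (Ideal.Quotient.mk (idealI k N) ∘ varTriple k a b c 2 0 0)) = 0 := by
  refine Module.End.apply_apply_eq_zero_of_commute ((fwdDiffₗ_commute _ _).pow_pow _ _)
    (w := Ideal.Quotient.mk (idealI k N) ∘ varTriple k a b c 1 0 1) ?_ ?_
  · change (Δ[idealI k N, (1, 0, -1)] ^ N (a, c))
      (Ideal.Quotient.mk _ ∘ (varTriple k a b c 2 0 0 + varTriple k a b c 1 0 1)) = 0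
    rw [fwdDiffₗ_pow_mk_comp_eq_zero_iff]
    rintro ⟨i, j, l⟩
    simp only [Pi.add_apply, smul_add, sum_add_distrib, sum_varTriple_sub_nsmul_fst_thd, ← add_mul]
    exact Ideal.mul_mem_right _ _ (fpq_two_zero_add_fpq_one_one_mem_idealI N a c i l)
  · exact (fwdDiffₗ_snd_thd_pow_mk_comp_varTriple_eq_zero_iff _ _ _ _ _ _ _ _).mpr
      (var_mul_fpq_zero_one_mem_idealI N hM a 1)

theorem var_two_mul_fpq_zero_zero_mem_idealI {M : ℕ} (hM : ∀ a b : ι, N (a, b) ≤ M)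
    (a x y : ι) (k₀ n m : ℤ) : X (a, 2, k₀) * fpq k x y 0 0 n m (3 * M) ∈ idealI k N := by
  set T := Ideal.Quotient.mk (idealI k N) ∘ varTriple k a x y 2 0 0
  have hx := fwdDiffₗ_pow_fwdDiffₗ_pow_varTriple_fst_snd_eq_zero (k := k) N a (hM x y)
  have hy := fwdDiffₗ_pow_fwdDiffₗ_pow_varTriple_fst_thd_eq_zero (k := k) N a (hM y x)
  have hxy : ((Δ[idealI k N, (1, 0, -1)] - Δ[idealI k N, (1, -1, 0)]) ^ (2 * M))
      ((Δ[idealI k N, (0, 1, -1)] ^ M) T) = 0 :=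
    Module.End.sub_pow_apply_eq_zero_of_le (fwdDiffₗ_commute _ _) hy hx
      (by linarith [hM a x, hM a y])
  rw [show ((1, 0, -1) : ℤ × ℤ × ℤ) = (0, 1, -1) + (1, -1, 0) from rfl,
    fwdDiffₗ_add_eq_shiftₗ_mul_add, add_sub_cancel_right,
    (shiftₗ_commute_fwdDiffₗ _ _).mul_pow, Module.End.mul_apply, shiftₗ_pow_apply_eq_zero_iff,
    ← Module.End.mul_apply, ← pow_add, show 2 * M + M = 3 * M by ring,
    fwdDiffₗ_snd_thd_pow_mk_comp_varTriple_eq_zero_iff] at hxy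
  exact hxy k₀ n m

end

theorem var_mul_fpq_zero_zero_mem_idealI_general
    (k X : Type*) [Field k]
    (N : X × X → ℕ) (M : ℕ) (hM : ∀ a b : X, N (a, b) ≤ M)
    (a x y : X) (r : ℕ) (hr : 2 ≤ r) (k₀ n m : ℤ) :
    MvPolynomial.X (a, r, k₀) * fpq k x y 0 0 n m (3 * M) ∈ idealI k N := by
  induction r, hr using Nat.le_induction with
  | base => exact var_two_mul_fpq_zero_zero_mem_idealI N hM a x y k₀ n m
  | succ r _ ih =>
    have hd : MvPolynomial.X (a, r + 1, k₀) * fpq k x y 0 0 n m (3 * M) =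
        derD k X (MvPolynomial.X (a, r, k₀) * fpq k x y 0 0 n m (3 * M)) -
          (MvPolynomial.X (a, r, k₀) * fpq k x y 1 0 n m (3 * M) +
            MvPolynomial.X (a, r, k₀) * fpq k x y 0 1 n m (3 * M)) := by
      rw [Derivation.leibniz, derD_fpq, derD_X, smul_eq_mul, smul_eq_mul]
      ring
    rw [hd]
    exact sub_mem (derD_mem_idealI N ih)
      (add_mem (var_mul_fpq_one_zero_mem_idealI N (by linarith [hM x y]) a r k₀ n m)
        (var_mul_fpq_zero_one_mem_idealI N (by linarith [hM y x]) a r k₀ n m))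

/-- `a^(r)(k₀) · f^{0,0}_{x,y}(n, m; 3M) ∈ I(N)` for `r ≥ 2`. -/
theorem var_mul_fpq_zero_zero_mem_idealI
    (k X : Type*) [Field k] [CharZero k] [Nonempty X]
    (N : X × X → ℕ) (M : ℕ) (hM : ∀ a b : X, N (a, b) ≤ M)
    (a x y : X) (r : ℕ) (hr : 2 ≤ r) (k₀ n m : ℤ) :
    MvPolynomial.X (a, r, k₀) * fpq k x y 0 0 n m (3 * M) ∈ idealI k N :=
  var_mul_fpq_zero_zero_mem_idealI_general k X N M hM a x y r hr k₀ n m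

end
end
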